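/- arXiv:2005.03874 — 3 statements merged into one kernel-verified Lean document; each statement's English description precedes it below -/
import Mathlib

section
/- For every positive integer m, every natural number ℓ with 0 ≤ ℓ ≤ m−1, and every rational x, one has ∑_{k=0, k+m odd}^{m-1} C(m,k)·C(k+m,ℓ)·B_{k+m−ℓ}(x) = (1/2)·∑_{j=0}^{m} (−1)^{j+m}·C(m,j)·C(j+m−1,ℓ)·(j+m)·x^{j+m−ℓ−1}, where the sum on the left runs only over those indices k in {0,…,m−1} for which k+m is odd. -/
/-!
Let `φ` be the `ℚ`-linear map on `ℚ[X]` sending `X ^ n` to `Bₙ`. Since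
`Bₙ(X + 1) - Bₙ(X) = n X ^ (n - 1)`, one has `φ (p (X + 1)) = φ p + p'` for every polynomial `p`.
For `p = X ^ m (X - 1) ^ m` we get `p (X + 1) = X ^ m (X + 1) ^ m`, and expanding both binomially
turns this into `∑ₖ (1 - (-1) ^ (k + m)) C(m, k) B_{k+m} = ∑ₖ (-1) ^ (k + m) C(m, k) (X ^ (k + m))'`.
Differentiating `ℓ` times and dividing by `ℓ!` gives the identity, since the coefficient
`1 - (-1) ^ (k + m)` is `2` when `k + m` is odd and `0` otherwise.
-/

open Finset

lemma sum_range_succ_one_sub_neg_one_pow_mul {R : Type*} [CommRing R] (m : ℕ) (f : ℕ → R) :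
    ∑ k ∈ range (m + 1), (1 - (-1) ^ (k + m)) * f k
      = 2 * ∑ k ∈ (range m).filter (fun k => Odd (k + m)), f k := by
  rw [sum_range_succ, ← two_mul, pow_mul, neg_one_sq, one_pow, sub_self, zero_mul, add_zero,
    sum_filter, mul_sum]
  refine sum_congr rfl fun k _ => ?_
  rcases Nat.even_or_odd (k + m) with h | h
  · rw [h.neg_one_pow, if_neg (Nat.not_odd_iff_even.mpr h)]; ring
  · rw [h.neg_one_pow, if_pos h]; ring

namespace Polynomial

noncomputable def bernoulliUmbral : ℚ[X] →ₗ[ℚ] ℚ[X] :=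
  lsum fun n => LinearMap.toSpanSingleton ℚ ℚ[X] (bernoulli n)

@[simp] lemma bernoulliUmbral_monomial (n : ℕ) (a : ℚ) :
    bernoulliUmbral (monomial n a) = a • bernoulli n := by
  simp [bernoulliUmbral, sum_monomial_index]

@[simp] lemma bernoulliUmbral_X_pow (n : ℕ) : bernoulliUmbral (X ^ n) = bernoulli n := by
  simp [X_pow_eq_monomial]

lemma bernoulliUmbral_X_add_one_pow (n : ℕ) :
    bernoulliUmbral ((X + 1) ^ n) = bernoulli n + derivative (X ^ n) := by
  cases n with
  | zero => simpa using bernoulliUmbral_X_pow 0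
  | succ n =>
    have hterm (i : ℕ) : (X ^ i * 1 ^ (n + 1 - i) * ((n + 1).choose i : ℚ[X]))
        = ((n + 1).choose i : ℚ) • X ^ i := by
      rw [one_pow, mul_one, ← C_eq_natCast, X_pow_mul_C, smul_eq_C_mul]
    simp only [add_pow, hterm, map_sum, map_smul, bernoulliUmbral_X_pow]
    rw [sum_range_succ, sum_bernoulli, Nat.choose_self, Nat.cast_one, one_smul, add_comm,
      derivative_X_pow_succ, ← C_mul_X_pow_eq_monomial]

lemma bernoulliUmbral_comp_X_add_one (p : ℚ[X]) :
    bernoulliUmbral (p.comp (X + 1)) = bernoulliUmbral p + derivative p := by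
  induction p using Polynomial.induction_on' with
  | add p q hp hq => simp only [add_comp, map_add, hp, hq]; abel
  | monomial n a =>
    rw [monomial_comp, ← smul_eq_C_mul, map_smul, bernoulliUmbral_X_add_one_pow,
      ← smul_X_eq_monomial, map_smul, derivative_smul, bernoulliUmbral_X_pow, smul_add]

lemma sum_one_sub_neg_one_pow_mul_choose_smul_bernoulli (m : ℕ) :
    ∑ k ∈ range (m + 1), ((1 - (-1) ^ (k + m)) * m.choose k : ℚ) • bernoulli (k + m)
      = ∑ k ∈ range (m + 1),
          ((-1) ^ (k + m) * m.choose k : ℚ) • derivative (X ^ (k + m) : ℚ[X]) := by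
  have hplus : (X ^ m * (X + 1) ^ m : ℚ[X])
      = ∑ k ∈ range (m + 1), (m.choose k : ℚ) • X ^ (k + m) := by
    rw [add_pow, mul_sum]
    refine sum_congr rfl fun k _ => ?_
    rw [smul_eq_C_mul, C_eq_natCast, one_pow, pow_add]
    ring
  have hminus : (X ^ m * (X - 1) ^ m : ℚ[X])
      = ∑ k ∈ range (m + 1), ((-1) ^ (k + m) * m.choose k : ℚ) • X ^ (k + m) := by
    rw [sub_pow, mul_sum]
    refine sum_congr rfl fun k _ => ?_
    rw [smul_eq_C_mul, C_mul, C_pow, C_neg, C_1, C_eq_natCast, one_pow, pow_add]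
    ring
  have hshift := bernoulliUmbral_comp_X_add_one (X ^ m * (X - 1) ^ m)
  rw [show (X ^ m * (X - 1) ^ m : ℚ[X]).comp (X + 1) = X ^ m * (X + 1) ^ m by
    simp only [mul_comp, pow_comp, X_comp, sub_comp, one_comp, add_sub_cancel_right]; ring,
    hplus, hminus] at hshift
  simp only [map_sum, map_smul, bernoulliUmbral_X_pow] at hshift
  simp only [sub_mul, one_mul, sub_smul, sum_sub_distrib, hshift]
  abel

lemma iterate_derivative_bernoulli (k n : ℕ) :
    derivative^[k] (bernoulli n) = (n.descFactorial k : ℚ) • bernoulli (n - k) := by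
  induction k with
  | zero => simp
  | succ k ih =>
    rw [Function.iterate_succ_apply', ih, derivative_smul, derivative_bernoulli,
      Nat.descFactorial_succ, Nat.sub_sub, ← C_eq_natCast, ← smul_eq_C_mul, smul_smul]
    congr 1
    push_cast
    ring

lemma sum_one_sub_neg_one_pow_mul_choose_mul_bernoulli_eval (m ℓ : ℕ) (x : ℚ) :
    ∑ k ∈ range (m + 1),
        (1 - (-1) ^ (k + m)) * (m.choose k * (k + m).choose ℓ * (bernoulli (k + m - ℓ)).eval x)
      = ∑ k ∈ range (m + 1),
          (-1) ^ (k + m) * m.choose k * (k + m - 1).choose ℓ * (k + m) * x ^ (k + m - ℓ - 1) := by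
  have h := congrArg (fun p => (derivative^[ℓ] p).eval x)
    (sum_one_sub_neg_one_pow_mul_choose_smul_bernoulli m)
  simp only [iterate_derivative_sum, iterate_derivative_smul, iterate_derivative_bernoulli,
    derivative_X_pow, iterate_derivative_C_mul, iterate_derivative_X_pow_eq_smul,
    eval_finsetSum, eval_smul, eval_C_mul, eval_pow, eval_X, smul_eq_mul,
    Nat.descFactorial_eq_factorial_mul_choose] at h
  apply mul_left_cancel₀ (by positivity : (ℓ.factorial : ℚ) ≠ 0)
  rw [mul_sum, mul_sum]
  convert h using 2 with k
  · push_cast; ring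
  · rw [Nat.sub_right_comm]; push_cast; ring

end Polynomial

theorem alzer_kwong_corollary_1_general (m : ℕ) (ℓ : ℕ) (x : ℚ) :
    ∑ k ∈ (Finset.range m).filter (fun k => Odd (k + m)),
      (m.choose k : ℚ) * ((k + m).choose ℓ) * (Polynomial.bernoulli (k + m - ℓ)).eval x
    = (1 / 2) * ∑ j ∈ Finset.range (m + 1),
        (-1 : ℚ) ^ (j + m) * (m.choose j) * ((j + m - 1).choose ℓ) * (j + m) *
          x ^ (j + m - ℓ - 1) := by
  rw [← Polynomial.sum_one_sub_neg_one_pow_mul_choose_mul_bernoulli_eval,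
    sum_range_succ_one_sub_neg_one_pow_mul]
  ring

theorem alzer_kwong_corollary_1 (m : ℕ) (hm : 0 < m) (ℓ : ℕ) (hℓ : ℓ + 1 ≤ m) (x : ℚ) :
    ∑ k ∈ (Finset.range m).filter (fun k => Odd (k + m)),
      (m.choose k : ℚ) * ((k + m).choose ℓ) * (Polynomial.bernoulli (k + m - ℓ)).eval x
    = (1 / 2) * ∑ j ∈ Finset.range (m + 1),
        (-1 : ℚ) ^ (j + m) * (m.choose j) * ((j + m - 1).choose ℓ) * (j + m) *
          x ^ (j + m - ℓ - 1) :=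
  alzer_kwong_corollary_1_general m ℓ x
end

section
/- (Alzer–Kwong) For every positive integer m and every natural number ν with 0 ≤ ν ≤ m−1, one has ∑_{k=0, k+m odd}^{m-1} C(m,k)·C(k+m,ν)·C(k+m−ν, m−1−ν)·B_{k+1} = (−1)^{m}·(m/2)·C(m−1,ν), where the sum on the left runs only over those indices k in {0,…,m−1} for which k+m is odd. -/
/-!
Since `C(k+m, ν) C(k+m-ν, m-1-ν) = C(k+m, m-1) C(m-1, ν)`, it suffices to treat `ν = 0`.
Odd-index Bernoulli numbers other than `B₁ = -1/2` vanish, so for `m` odd only `k = 0`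
contributes, giving `-m/2`. For `m` even, Vandermonde's identity rewrites
`∑_{k ≤ m} C(m,k) C(m+k,k+1) B_{k+1}` as `∑_{r < m} C(m,r+1) C(m,r) U(m-r, r+1)` with
`U(n,s) = ∑_j C(n,j) B_{s+j}`. The reciprocity `U(n,s) = (-1)^(n+s) U(s,n)`, which follows by
induction on `n` from Pascal's rule and `∑_j C(s,j) B_j = (-1)^s B_s`, makes the terms `r` and
`m-1-r` cancel, so the full sum is `0`; removing the `k = 0` term `-m/2` gives the claim.
-/

open Finset

def bernoulliBinomSum (n s : ℕ) : ℚ := ∑ j ∈ range (n + 1), (n.choose j : ℚ) * bernoulli (s + j)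

theorem sum_range_succ_choose_mul_bernoulli (n : ℕ) :
    ∑ j ∈ range (n + 1), (n.choose j : ℚ) * bernoulli j = bernoulli' n := by
  rw [← Polynomial.bernoulli_eval_one, Polynomial.bernoulli, Polynomial.eval_finsetSum]
  simp [mul_comm]

theorem bernoulliBinomSum_zero_left (s : ℕ) : bernoulliBinomSum 0 s = bernoulli s := by
  simp [bernoulliBinomSum]

theorem bernoulliBinomSum_zero_right (n : ℕ) : bernoulliBinomSum n 0 = bernoulli' n := by
  simp only [bernoulliBinomSum, zero_add, sum_range_succ_choose_mul_bernoulli]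

theorem bernoulliBinomSum_succ_left (n s : ℕ) :
    bernoulliBinomSum (n + 1) s = bernoulliBinomSum n s + bernoulliBinomSum n (s + 1) := by
  have := sum_choose_succ_mul (R := ℚ) (fun i _ => bernoulli (s + i)) n
  simpa only [bernoulliBinomSum, add_right_comm s, ← add_assoc] using this

theorem bernoulliBinomSum_comm (n s : ℕ) :
    bernoulliBinomSum n s = (-1) ^ (n + s) * bernoulliBinomSum s n := by
  induction n generalizing s with
  | zero =>
    rw [bernoulliBinomSum_zero_left, bernoulliBinomSum_zero_right, bernoulli'_eq_bernoulli,
      ← mul_assoc, ← pow_add, zero_add, Even.neg_one_pow ⟨s, rfl⟩, one_mul]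
  | succ n ih =>
    have hs := bernoulliBinomSum_succ_left s n
    rw [bernoulliBinomSum_succ_left, ih, ih, hs, add_right_comm, ← add_assoc, pow_succ]
    ring

theorem choose_mul_add_choose_succ_eq_sum (m k : ℕ) :
    m.choose k * (m + k).choose (k + 1)
      = ∑ r ∈ range (k + 1), m.choose (r + 1) * (m.choose r * (m - r).choose (k - r)) := by
  rw [Nat.add_choose_eq, Nat.sum_antidiagonal_eq_sum_range_succ_mk, mul_sum, sum_range_succ', Nat.choose_zero_right, Nat.sub_zero, Nat.choose_succ_self,
    mul_zero, mul_zero, add_zero]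
  refine sum_congr rfl fun r hr => ?_
  have hrk : r ≤ k := Nat.lt_succ_iff.mp (mem_range.mp hr)
  rw [Nat.succ_sub_succ, Nat.choose_symm hrk, mul_left_comm, Nat.choose_mul hrk]

theorem sum_Ico_choose_sub_mul_bernoulli_succ {m r : ℕ} (hr : r ≤ m) :
    ∑ k ∈ Ico r (m + 1), ((m - r).choose (k - r) : ℚ) * bernoulli (k + 1)
      = bernoulliBinomSum (m - r) (r + 1) := by
  rw [sum_Ico_eq_sum_range, show m + 1 - r = m - r + 1 by omega, bernoulliBinomSum]
  refine sum_congr rfl fun j _ => ?_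
  rw [Nat.add_sub_cancel_left, add_right_comm]

theorem sum_choose_mul_add_choose_succ_mul_bernoulli (m : ℕ) :
    ∑ k ∈ range (m + 1), (m.choose k : ℚ) * (m + k).choose (k + 1) * bernoulli (k + 1)
      = ∑ r ∈ range m, (m.choose (r + 1) : ℚ) * m.choose r * bernoulliBinomSum (m - r) (r + 1) := by
  calc _ = ∑ k ∈ range (m + 1), ∑ r ∈ range (k + 1),
          (m.choose (r + 1) : ℚ) * m.choose r * ((m - r).choose (k - r) * bernoulli (k + 1)) := by
        refine sum_congr rfl fun k _ => ?_
        rw [← Nat.cast_mul, choose_mul_add_choose_succ_eq_sum, Nat.cast_sum, sum_mul]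
        exact sum_congr rfl fun r _ => by push_cast; ring
    _ = ∑ r ∈ range (m + 1), (m.choose (r + 1) : ℚ) * m.choose r *
          bernoulliBinomSum (m - r) (r + 1) := by
        simp only [range_eq_Ico]
        rw [← sum_Ico_Ico_comm]
        refine sum_congr rfl fun r hr => ?_
        rw [← mul_sum, sum_Ico_choose_sub_mul_bernoulli_succ (Nat.lt_succ_iff.mp (mem_Ico.mp hr).2)]
    _ = _ := by
        rw [sum_range_succ, Nat.choose_succ_self, Nat.cast_zero, zero_mul, zero_mul, add_zero]

theorem sum_choose_mul_add_choose_succ_mul_bernoulli_of_even {m : ℕ} (hm : Even m) :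
    ∑ k ∈ range (m + 1), (m.choose k : ℚ) * (m + k).choose (k + 1) * bernoulli (k + 1) = 0 := by
  set T : ℕ → ℚ := fun r => m.choose (r + 1) * m.choose r * bernoulliBinomSum (m - r) (r + 1)
  have hT : ∀ r ∈ range m, T (m - 1 - r) = -T r := by
    intro r hr
    have hrm : r < m := mem_range.mp hr
    simp only [T]
    rw [show m - 1 - r + 1 = m - r by omega, show m - (m - 1 - r) = r + 1 by omega,
      Nat.choose_symm hrm.le, show m - 1 - r = m - (r + 1) by omega, Nat.choose_symm hrm,
      bernoulliBinomSum_comm (r + 1), show r + 1 + (m - r) = m + 1 by omega, pow_succ,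
      hm.neg_one_pow]
    ring
  have hsum : ∑ r ∈ range m, T r = -∑ r ∈ range m, T r := by
    conv_lhs => rw [← sum_range_reflect]
    rw [← sum_neg_distrib]
    exact sum_congr rfl hT
  rw [sum_choose_mul_add_choose_succ_mul_bernoulli]
  linarith

theorem sum_mul_bernoulli_succ_of_forall_even {s : Finset ℕ} (f : ℕ → ℚ) (hs : ∀ k ∈ s, Even k)
    (h0 : 0 ∈ s) : ∑ k ∈ s, f k * bernoulli (k + 1) = -f 0 / 2 := by
  rw [sum_eq_single_of_mem 0 h0 fun k hk hk0 => by
    rw [bernoulli_eq_zero_of_odd (hs k hk).add_one (by omega), mul_zero]]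
  rw [zero_add, bernoulli_one]
  ring

theorem sum_filter_odd_choose_mul_choose_mul_bernoulli {m : ℕ} (hm : 0 < m) :
    ∑ k ∈ (range m).filter (fun k => Odd (k + m)),
      (m.choose k : ℚ) * (k + m).choose (m - 1) * bernoulli (k + 1) = (-1) ^ m * (m / 2) := by
  set f : ℕ → ℚ := fun k => m.choose k * (k + m).choose (m - 1)
  have hf0 : f 0 = m := by
    simp [f, Nat.choose_symm_of_eq_add (show m = m - 1 + 1 by omega)]
  rcases Nat.even_or_odd m with hme | hmo
  · have hfull : ∑ k ∈ range (m + 1), f k * bernoulli (k + 1) = 0 := by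
      rw [← sum_choose_mul_add_choose_succ_mul_bernoulli_of_even hme]
      refine sum_congr rfl fun k _ => ?_
      simp only [f]
      rw [add_comm k m, Nat.choose_symm_of_eq_add (show m + k = m - 1 + (k + 1) by omega)]
    have hfilter : (range (m + 1)).filter (fun k => Odd (k + m))
        = (range m).filter (fun k => Odd (k + m)) := by
      rw [range_add_one, filter_insert, if_neg (by grind)]
    have hrest : ∑ k ∈ (range (m + 1)).filter (fun k => ¬Odd (k + m)), f k * bernoulli (k + 1)
        = -m / 2 := by
      rw [sum_mul_bernoulli_succ_of_forall_even f, hf0]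
      · intro k hk
        simp only [mem_filter] at hk
        grind
      · simpa using hme
    rw [← sum_filter_add_sum_filter_not _ (fun k => Odd (k + m)), hfilter, hrest] at hfull
    rw [hme.neg_one_pow]
    linarith
  · rw [sum_mul_bernoulli_succ_of_forall_even f, hf0, hmo.neg_one_pow]
    · ring
    · intro k hk
      simp only [mem_filter] at hk
      grind
    · simp [hm, hmo]

theorem alzer_kwong_numbers_2_general (m : ℕ) (ν : ℕ) (hν : ν + 1 ≤ m) :
    ∑ k ∈ (Finset.range m).filter (fun k => Odd (k + m)),
      (m.choose k : ℚ) * ((k + m).choose ν) * ((k + m - ν).choose (m - 1 - ν)) *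
        bernoulli (k + 1)
    = (-1 : ℚ) ^ m * (m / 2) * ((m - 1).choose ν) := by
  have hchoose (k : ℕ) : ((k + m).choose ν : ℚ) * (k + m - ν).choose (m - 1 - ν)
      = (k + m).choose (m - 1) * (m - 1).choose ν := by
    exact_mod_cast (Nat.choose_mul (n := k + m) (show ν ≤ m - 1 by omega)).symm
  calc _ = ∑ k ∈ (range m).filter (fun k => Odd (k + m)),
        (m.choose k : ℚ) * (k + m).choose (m - 1) * bernoulli (k + 1) * (m - 1).choose ν :=
        sum_congr rfl fun k _ => by rw [mul_assoc _ (((k + m).choose ν : ℕ) : ℚ), hchoose]; ring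
    _ = _ := by rw [← sum_mul, sum_filter_odd_choose_mul_choose_mul_bernoulli (by omega)]

theorem alzer_kwong_numbers_2 (m : ℕ) (hm : 0 < m) (ν : ℕ) (hν : ν + 1 ≤ m) :
    ∑ k ∈ (Finset.range m).filter (fun k => Odd (k + m)),
      (m.choose k : ℚ) * ((k + m).choose ν) * ((k + m - ν).choose (m - 1 - ν)) *
        bernoulli (k + 1)
    = (-1 : ℚ) ^ m * (m / 2) * ((m - 1).choose ν) :=
  alzer_kwong_numbers_2_general m ν hν
end

section
/- (Momiyama) For all natural numbers m and n with m+n > 0, one has ∑_{j=0}^{m+1} C(m+1, j)·(n+j+1)·B_{n+j} = −(−1)^{m+n}·∑_{k=0}^{n+1} C(n+1, k)·(m+k+1)·B_{m+k}. -/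
/-!
Let `L : ℚ[X] → ℚ` be the linear functional `X ^ k ↦ B_k`. Since
`L ((X + 1) ^ k) = B_k(1) = (-1) ^ k B_k`, `L` is invariant under the substitution `X ↦ -X - 1`,
and hence `L (p') = -L ((p ∘ (-X - 1))')`. For `p = X ^ (n + 1) (X + 1) ^ (m + 1)` the
substitution swaps `m` and `n` up to the sign `(-1) ^ (m + n)`, and `L (p')` expands to the
left-hand side of Momiyama's identity.
-/

open Finset

section BernoulliFunctional

open Polynomial

noncomputable def bernoulliFunctional : ℚ[X] →ₗ[ℚ] ℚ :=
  lsum fun k => LinearMap.toSpanSingleton ℚ ℚ (_root_.bernoulli k)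

theorem bernoulliFunctional_monomial (k : ℕ) (a : ℚ) :
    bernoulliFunctional (monomial k a) = a * _root_.bernoulli k := by
  simp [bernoulliFunctional, LinearMap.toSpanSingleton_apply]

theorem bernoulliFunctional_X_add_one_pow (k : ℕ) :
    bernoulliFunctional ((X + 1) ^ k) = bernoulli' k := by
  rw [← Polynomial.bernoulli_eval_one, Polynomial.bernoulli, eval_finsetSum, add_pow, map_sum]
  refine sum_congr rfl fun j _ => ?_
  rw [one_pow, mul_one, ← C_eq_natCast, mul_comm, C_mul_X_pow_eq_monomial,
    bernoulliFunctional_monomial, eval_monomial, one_pow, mul_one, mul_comm]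

theorem bernoulliFunctional_comp_neg_X_sub_one (p : ℚ[X]) :
    bernoulliFunctional (p.comp (-X - 1)) = bernoulliFunctional p := by
  induction p using Polynomial.induction_on' with
  | add p q hp hq => rw [add_comp, map_add, map_add, hp, hq]
  | monomial k a =>
    have hsubst : (monomial k a).comp (-X - 1) = ((-1) ^ k * a) • (X + 1 : ℚ[X]) ^ k := by
      rw [monomial_comp, smul_eq_C_mul, C_mul, C_pow, map_neg, map_one,
        show (-X - 1 : ℚ[X]) = -1 * (X + 1) by ring, mul_pow]
      ring
    rw [hsubst, map_smul, bernoulliFunctional_X_add_one_pow, bernoulli'_eq_bernoulli,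
      bernoulliFunctional_monomial, smul_eq_mul]
    have hsign : (-1 : ℚ) ^ (k + k) = 1 := Even.neg_one_pow ⟨k, rfl⟩
    linear_combination (a * _root_.bernoulli k) * hsign

theorem bernoulliFunctional_derivative_comp_neg_X_sub_one (p : ℚ[X]) :
    bernoulliFunctional (derivative (p.comp (-X - 1))) =
      -bernoulliFunctional (derivative p) := by
  rw [derivative_comp, show derivative (-X - 1 : ℚ[X]) = -1 by simp, neg_one_mul, map_neg,
    bernoulliFunctional_comp_neg_X_sub_one]

theorem X_pow_mul_X_add_one_pow_comp_neg_X_sub_one (a b : ℕ) :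
    (X ^ a * (X + 1) ^ b : ℚ[X]).comp (-X - 1) =
      ((-1) ^ (a + b) : ℚ) • (X ^ b * (X + 1) ^ a) := by
  rw [mul_comp, pow_comp, pow_comp, X_comp, add_comp, X_comp, one_comp, smul_eq_C_mul,
    map_pow, map_neg, map_one, show (-X - 1 : ℚ[X]) = -1 * (X + 1) by ring,
    show (-1 * (X + 1) + 1 : ℚ[X]) = -1 * X by ring, mul_pow, mul_pow, pow_add]
  ring

theorem bernoulliFunctional_derivative_X_pow_mul_X_add_one_pow (m n : ℕ) :
    bernoulliFunctional (derivative (X ^ (n + 1) * (X + 1) ^ (m + 1)))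
      = ∑ j ∈ range (m + 2),
          ((m + 1).choose j : ℚ) * (n + j + 1) * _root_.bernoulli (n + j) := by
  rw [add_pow, mul_sum, derivative_sum, map_sum]
  refine sum_congr rfl fun j _ => ?_
  rw [one_pow, mul_one, ← C_eq_natCast, ← mul_assoc, ← pow_add, mul_comm,
    C_mul_X_pow_eq_monomial, derivative_monomial, bernoulliFunctional_monomial,
    show n + 1 + j - 1 = n + j by omega]
  push_cast
  ring

end BernoulliFunctional

theorem momiyama_general (m n : ℕ) :
    ∑ j ∈ Finset.range (m + 2), ((m + 1).choose j : ℚ) * (n + j + 1) * bernoulli (n + j)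
    = -(-1 : ℚ) ^ (m + n) *
        ∑ k ∈ Finset.range (n + 2), ((n + 1).choose k : ℚ) * (m + k + 1) * bernoulli (m + k) := by
  open Polynomial in
  rw [← bernoulliFunctional_derivative_X_pow_mul_X_add_one_pow,
    ← bernoulliFunctional_derivative_X_pow_mul_X_add_one_pow, ← neg_neg (bernoulliFunctional _),
    ← bernoulliFunctional_derivative_comp_neg_X_sub_one,
    X_pow_mul_X_add_one_pow_comp_neg_X_sub_one,
    derivative_smul, map_smul, smul_eq_mul, show n + 1 + (m + 1) = m + n + 2 by omega, pow_add]
  ring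

theorem momiyama (m n : ℕ) (hmn : 0 < m + n) :
    ∑ j ∈ Finset.range (m + 2), ((m + 1).choose j : ℚ) * (n + j + 1) * bernoulli (n + j)
    = -(-1 : ℚ) ^ (m + n) *
        ∑ k ∈ Finset.range (n + 2), ((n + 1).choose k : ℚ) * (m + k + 1) * bernoulli (m + k) :=
  momiyama_general m n
end
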